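/- Let S be a GPT state space in ℝ^{d+1}. Given an actual face F of the unrestricted effect space E(S), there exists a minimal exposed face M of S such that, for all ω ∈ S, one has e·ω = 1 for all e ∈ F if and only if ω ∈ M. -/
import Mathlib


namespace GPT

/-- Euclidean dot product on `Fin n → ℝ`. -/
def dot {n : ℕ} (x y : Fin n → ℝ) : ℝ := ∑ i, x i * y i

/-- The unit effect `u = (0, …, 0, 1)` in `ℝ^{d+1}`. -/
def unit (d : ℕ) : Fin (d + 1) → ℝ := fun i => if i = Fin.last d then 1 else 0

/-- A GPT state space: a nonempty compact convex subset of `ℝ^{d+1}` whose elements all have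
last coordinate equal to `1`. -/
def IsStateSpace (d : ℕ) (S : Set (Fin (d + 1) → ℝ)) : Prop :=
  S.Nonempty ∧ IsCompact S ∧ Convex ℝ S ∧ ∀ ω ∈ S, ω (Fin.last d) = 1

/-- The unrestricted effect space `E(S)` of a state space `S`. -/
def unrestricted (d : ℕ) (S : Set (Fin (d + 1) → ℝ)) : Set (Fin (d + 1) → ℝ) :=
  {e | ∀ ω ∈ S, 0 ≤ dot e ω ∧ dot e ω ≤ 1}

/-- A GPT effect space for the state space `S`. -/
def IsEffectSpace (d : ℕ) (S E : Set (Fin (d + 1) → ℝ)) : Prop :=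
  E ⊆ unrestricted d S ∧ Convex ℝ E ∧ (0 : Fin (d + 1) → ℝ) ∈ E ∧ unit d ∈ E ∧
    (∀ e ∈ E, unit d - e ∈ E) ∧ Submodule.span ℝ E = ⊤

/-- `W(𝓔)`: the set of all mathematically reasonable states for the effect space `𝓔`. -/
def W (d : ℕ) (E : Set (Fin (d + 1) → ℝ)) : Set (Fin (d + 1) → ℝ) :=
  {ω | (∀ e ∈ E, dot ω e ≤ 1) ∧ dot ω (unit d) = 1}

/-- The actual set `A^X_ω` of `ω` in a set of effects `X`. -/
def actualSet {n : ℕ} (X : Set (Fin n → ℝ)) (ω : Fin n → ℝ) : Set (Fin n → ℝ) :=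
  {e ∈ X | dot e ω = 1}

/-- An exposed face of a convex set `C`: a nonempty set of the form
`C ∩ {x : h·x = m}` with `h ≠ 0` and `h·c ≤ m` for all `c ∈ C`. -/
def IsExposedFace {n : ℕ} (C F : Set (Fin n → ℝ)) : Prop :=
  F.Nonempty ∧ ∃ (h : Fin n → ℝ) (m : ℝ), h ≠ 0 ∧ (∀ c ∈ C, dot h c ≤ m) ∧
    F = {x ∈ C | dot h x = m}

/-- An exposed point of a convex set. -/
def IsExposedPoint {n : ℕ} (C : Set (Fin n → ℝ)) (x : Fin n → ℝ) : Prop :=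
  IsExposedFace C {x}

/-- An actual face of an effect space `E`: an exposed face containing the unit effect that is
maximal among exposed faces. -/
def IsActualFace (d : ℕ) (E F : Set (Fin (d + 1) → ℝ)) : Prop :=
  IsExposedFace E F ∧ unit d ∈ F ∧ ∀ F', IsExposedFace E F' → ¬F ⊂ F'

/-- A minimal exposed face of a convex set. -/
def IsMinimalExposedFace {n : ℕ} (C M : Set (Fin n → ℝ)) : Prop :=
  IsExposedFace C M ∧ ∀ N, IsExposedFace C N → M ∩ N = M ∨ M ∩ N = ∅

/-- Intermediate determinism: every extreme (pure) state of `S` is uniquely identified among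
states in `S` by its actual set of effects in `𝓔`. -/
def IntermediateDeterminism (d : ℕ) (S E : Set (Fin (d + 1) → ℝ)) : Prop :=
  ∀ ω ∈ S.extremePoints ℝ, ∀ ω' ∈ S, actualSet E ω' = actualSet E ω → ω' = ω

end GPT

namespace GPTAux
open GPT

variable {n : ℕ}

lemma dot_comm (x y : Fin n → ℝ) : dot x y = dot y x :=
  Finset.sum_congr rfl fun i _ => mul_comm _ _

lemma dot_add_left (x y z : Fin n → ℝ) : dot (x + y) z = dot x z + dot y z := by
  unfold GPT.dot; rw [← Finset.sum_add_distrib]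
  exact Finset.sum_congr rfl fun i _ => by simp [add_mul]

lemma dot_sub_left (x y z : Fin n → ℝ) : dot (x - y) z = dot x z - dot y z := by
  unfold GPT.dot; rw [← Finset.sum_sub_distrib]
  exact Finset.sum_congr rfl fun i _ => by simp [sub_mul]

lemma dot_smul_left (c : ℝ) (x z : Fin n → ℝ) : dot (c • x) z = c * dot x z := by
  unfold GPT.dot; rw [Finset.mul_sum]
  exact Finset.sum_congr rfl fun i _ => by simp [mul_assoc]

lemma dot_add_right (x y z : Fin n → ℝ) : dot x (y + z) = dot x y + dot x z := by
  rw [dot_comm, dot_add_left, dot_comm y x, dot_comm z x]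

lemma dot_sub_right (x y z : Fin n → ℝ) : dot x (y - z) = dot x y - dot x z := by
  rw [dot_comm, dot_sub_left, dot_comm y x, dot_comm z x]

lemma dot_smul_right (c : ℝ) (x z : Fin n → ℝ) : dot x (c • z) = c * dot x z := by
  rw [dot_comm, dot_smul_left, dot_comm z x]

lemma dot_zero_left (z : Fin n → ℝ) : dot 0 z = 0 := by unfold GPT.dot; simp

lemma dot_zero_right (z : Fin n → ℝ) : dot z 0 = 0 := by unfold GPT.dot; simp

lemma eq_zero_of_dot_self (x : Fin n → ℝ) (h : dot x x = 0) : x = 0 := by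
  funext i
  have := (Finset.sum_eq_zero_iff_of_nonneg (fun i _ => mul_self_nonneg (x i))).1 h i
    (Finset.mem_univ i)
  exact mul_self_eq_zero.1 this

lemma continuous_dot (v : Fin n → ℝ) : Continuous (fun y => dot v y) :=
  continuous_finset_sum _ fun i _ => continuous_const.mul (continuous_apply i)

/-- `dot f ·` as a linear map. -/
def dotL (f : Fin n → ℝ) : (Fin n → ℝ) →ₗ[ℝ] ℝ where
  toFun := fun y => dot f y
  map_add' := fun x y => dot_add_right f x y
  map_smul' := fun c x => by simpa using dot_smul_right c f x

lemma dot_unit_left {d : ℕ} (x : Fin (d+1) → ℝ) : dot (unit d) x = x (Fin.last d) := by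
  unfold GPT.dot GPT.unit
  rw [Finset.sum_eq_single (Fin.last d)]
  · simp
  · intro i _ hi; simp [hi]
  · intro h; exact absurd (Finset.mem_univ _) h

lemma dot_unit_right {d : ℕ} (x : Fin (d+1) → ℝ) : dot x (unit d) = x (Fin.last d) := by
  rw [dot_comm, dot_unit_left]

/-- representation of a continuous linear functional by a vector. -/
lemma exists_dot_repr (f : (Fin n → ℝ) →L[ℝ] ℝ) : ∃ v : Fin n → ℝ, ∀ x, dot v x = f x := by
  refine ⟨fun i => f (fun j => if i = j then 1 else 0), fun x => ?_⟩
  conv_rhs => rw [pi_eq_sum_univ x, map_sum]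
  exact Finset.sum_congr rfl fun i _ => by rw [map_smul]; simp [mul_comm]

/-- a bound on |dot v ω| over a compact nonempty S -/
lemma exists_dot_bound {S : Set (Fin n → ℝ)} (hc : IsCompact S) (hne : S.Nonempty)
    (v : Fin n → ℝ) : ∃ C : ℝ, 0 ≤ C ∧ ∀ ω ∈ S, |dot v ω| ≤ C := by
  obtain ⟨x, hx, hmax⟩ := hc.exists_isMaxOn hne
    ((continuous_abs.comp (continuous_dot v)).continuousOn)
  exact ⟨|dot v x|, abs_nonneg _, fun ω hω => hmax hω⟩

end GPTAux

namespace GPTAux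
open GPT

variable {n : ℕ}

lemma zero_mem_unrestricted {d : ℕ} {S : Set (Fin (d+1) → ℝ)} :
    (0 : Fin (d+1) → ℝ) ∈ unrestricted d S := by
  intro ω hω
  rw [dot_zero_left]
  norm_num

lemma dot_unit_state {d : ℕ} {S : Set (Fin (d+1) → ℝ)}
    (hSlast : ∀ ω ∈ S, ω (Fin.last d) = 1) {ω : Fin (d+1) → ℝ} (hω : ω ∈ S) :
    dot (unit d) ω = 1 := by rw [dot_unit_left]; exact hSlast ω hω

lemma unit_mem_unrestricted {d : ℕ} {S : Set (Fin (d+1) → ℝ)}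
    (hSlast : ∀ ω ∈ S, ω (Fin.last d) = 1) : unit d ∈ unrestricted d S := by
  intro ω hω
  rw [dot_unit_state hSlast hω]
  norm_num

lemma compl_mem_unrestricted {d : ℕ} {S : Set (Fin (d+1) → ℝ)}
    (hSlast : ∀ ω ∈ S, ω (Fin.last d) = 1) {e : Fin (d+1) → ℝ}
    (he : e ∈ unrestricted d S) : unit d - e ∈ unrestricted d S := by
  intro ω hω
  rw [dot_sub_left, dot_unit_state hSlast hω]
  obtain ⟨h1, h2⟩ := he ω hω
  constructor <;> linarith

/-- Step 1: a functional maximized over `E(S)` at the unit effect is a positive multiple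
of a state. -/
lemma exists_state_normal {d : ℕ} {S : Set (Fin (d+1) → ℝ)} (hS : IsStateSpace d S)
    {h : Fin (d+1) → ℝ} (hh0 : h ≠ 0)
    (hle : ∀ c ∈ unrestricted d S, dot h c ≤ dot h (unit d)) :
    ∃ t : ℝ, 0 < t ∧ ∃ ω₀ ∈ S, h = t • ω₀ := by
  obtain ⟨hSne, hScomp, hSconv, hSlast⟩ := hS
  set t := dot h (unit d) with ht_def
  have ht0 : 0 ≤ t := by
    have := hle 0 zero_mem_unrestricted
    rwa [dot_zero_right] at this
  -- if t = 0 then h = 0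
  have hEzero : t = 0 → h = 0 := by
    intro ht
    have hall : ∀ e ∈ unrestricted d S, dot h e = 0 := by
      intro e he
      have h1 : dot h e ≤ 0 := ht ▸ hle e he
      have h2 : dot h (unit d - e) ≤ 0 := ht ▸ hle _ (compl_mem_unrestricted hSlast he)
      rw [dot_sub_right, ← ht_def, ht] at h2
      linarith
    have hw : ∀ w : Fin (d+1) → ℝ, dot h w = 0 := by
      intro w
      obtain ⟨C, hC0, hCb⟩ := exists_dot_bound hScomp hSne w
      have hpos : (0:ℝ) < 2*C+1 := by linarith
      have heE : (2*C+1)⁻¹ • (w + C • unit d) ∈ unrestricted d S := by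
        intro ω hω
        have hb := abs_le.1 (hCb ω hω)
        rw [dot_smul_left, dot_add_left, dot_smul_left, dot_unit_state hSlast hω]
        have hinv : (0:ℝ) < (2*C+1)⁻¹ := inv_pos.2 hpos
        constructor
        · exact mul_nonneg hinv.le (by linarith)
        · refine le_trans (mul_le_mul_of_nonneg_left (by linarith : dot w ω + C * 1 ≤ 2*C+1) hinv.le) ?_
          rw [inv_mul_cancel₀ hpos.ne']
      have := hall _ heE
      rw [dot_smul_right, dot_add_right, dot_smul_right, ← ht_def, ht, mul_zero,
        add_zero] at this
      rcases mul_eq_zero.1 this with h' | h'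
      · exact absurd h' (inv_ne_zero hpos.ne')
      · exact h'
    exact eq_zero_of_dot_self h (hw h)
  have htpos : 0 < t := lt_of_le_of_ne ht0 (fun h' => hh0 (hEzero h'.symm))
  refine ⟨t, htpos, t⁻¹ • h, ?_, (smul_inv_smul₀ htpos.ne' h).symm⟩
  -- show t⁻¹ • h ∈ S by contradiction using Hahn-Banach separation
  by_contra hnot
  obtain ⟨f, c, hfc, hcf⟩ := geometric_hahn_banach_closed_point hSconv hScomp.isClosed hnot
  obtain ⟨vf, hvf⟩ := exists_dot_repr f
  set v := vf - c • unit d with hv_def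
  have hvω : ∀ ω ∈ S, dot v ω = f ω - c := by
    intro ω hω
    rw [hv_def, dot_sub_left, dot_smul_left, dot_unit_state hSlast hω, hvf, mul_one]
  obtain ⟨C, hC0, hCb⟩ := exists_dot_bound hScomp hSne v
  have hCpos : (0:ℝ) < C + 1 := by linarith
  set ε := (C+1)⁻¹ with hε_def
  have hεpos : (0:ℝ) < ε := inv_pos.2 hCpos
  have heE : unit d + ε • v ∈ unrestricted d S := by
    intro ω hω
    have hb := abs_le.1 (hCb ω hω)
    have hlt : dot v ω < 0 := by rw [hvω ω hω]; linarith [hfc ω hω]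
    rw [dot_add_left, dot_smul_left, dot_unit_state hSlast hω]
    constructor
    · have h1 : ε * dot v ω ≥ ε * (-C) := mul_le_mul_of_nonneg_left hb.1 hεpos.le
      have h2 : ε * C < 1 := by
        rw [← inv_mul_cancel₀ hCpos.ne']
        exact mul_lt_mul_of_pos_left (by linarith) hεpos
      nlinarith
    · nlinarith [mul_pos hεpos (neg_pos.2 hlt)]
  have h1 := hle _ heE
  have hvh : 0 < dot h v := by
    have hfh : f h = t * f (t⁻¹ • h) := by
      conv_lhs => rw [← smul_inv_smul₀ htpos.ne' h]
      rw [map_smul, smul_eq_mul]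
    have hdvh : dot v h = f h - c * t := by
      rw [hv_def, dot_sub_left, dot_smul_left, dot_unit_left, hvf]
      have : h (Fin.last d) = t := by rw [ht_def, dot_unit_right]
      rw [this]
    rw [dot_comm, hdvh, hfh]
    have := mul_lt_mul_of_pos_left hcf htpos
    linarith
  rw [dot_add_right, dot_smul_right, ← ht_def] at h1
  nlinarith

/-- Step 2: in the family of exposed faces `{ω ∈ S | dot f ω = 0}`, `f ∈ Z`, there is a
smallest one. -/
lemma exists_min_face {S Z : Set (Fin n → ℝ)}
    (hmid : ∀ f ∈ Z, ∀ g ∈ Z, (2:ℝ)⁻¹ • (f + g) ∈ Z)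
    (hnonneg : ∀ f ∈ Z, ∀ ω ∈ S, 0 ≤ dot f ω)
    {ω₀ : Fin n → ℝ} (hω₀S : ω₀ ∈ S) (hω₀z : ∀ f ∈ Z, dot f ω₀ = 0)
    (hZne : Z.Nonempty) :
    ∃ fs ∈ Z, ∀ ω ∈ S, dot fs ω = 0 → ∀ f ∈ Z, dot f ω = 0 := by
  classical
  set r : (Fin n → ℝ) → ℕ :=
    fun f => Module.finrank ℝ (vectorSpan ℝ {ω ∈ S | dot f ω = 0}) with hr_def
  set T : Set ℕ := r '' Z with hT_def
  have hTne : T.Nonempty := hZne.image r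
  obtain ⟨fs, hfsZ, hfsr⟩ := Nat.sInf_mem hTne
  refine ⟨fs, hfsZ, ?_⟩
  intro ω₁ hω₁S hω₁0 f hfZ
  by_contra hne0
  have hpos : 0 < dot f ω₁ := (hnonneg f hfZ ω₁ hω₁S).lt_of_ne (Ne.symm hne0)
  set g := (2:ℝ)⁻¹ • (fs + f) with hg_def
  have hgZ : g ∈ Z := hmid _ hfsZ _ hfZ
  have hgiff : ∀ ω ∈ S, (dot g ω = 0 ↔ dot fs ω = 0 ∧ dot f ω = 0) := by
    intro ω hω
    have h1 := hnonneg fs hfsZ ω hω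
    have h2 := hnonneg f hfZ ω hω
    rw [hg_def, dot_smul_left, dot_add_left]
    constructor
    · intro h3
      constructor <;> nlinarith
    · rintro ⟨h3, h4⟩
      rw [h3, h4]; ring
  have hsub : {ω ∈ S | dot g ω = 0} ⊆ {ω ∈ S | dot fs ω = 0} := by
    rintro ω ⟨hω, hω0⟩
    exact ⟨hω, ((hgiff ω hω).1 hω0).1⟩
  have hω₁mem : ω₁ ∈ {ω ∈ S | dot fs ω = 0} := ⟨hω₁S, hω₁0⟩
  have hω₀mem : ω₀ ∈ {ω ∈ S | dot fs ω = 0} := ⟨hω₀S, hω₀z fs hfsZ⟩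
  have hker : vectorSpan ℝ {ω ∈ S | dot g ω = 0} ≤ LinearMap.ker (dotL f) := by
    rw [vectorSpan_def]
    rw [Submodule.span_le]
    rintro x ⟨a, ha, b, hb, rfl⟩
    obtain ⟨haS, ha0⟩ := ha
    obtain ⟨hbS, hb0⟩ := hb
    have ha' := ((hgiff a haS).1 ha0).2
    have hb' := ((hgiff b hbS).1 hb0).2
    simp only [SetLike.mem_coe, LinearMap.mem_ker]
    show dot f (a - b) = 0
    rw [dot_sub_right, ha', hb', sub_zero]
  have hlt : vectorSpan ℝ {ω ∈ S | dot g ω = 0} < vectorSpan ℝ {ω ∈ S | dot fs ω = 0} := by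
    refine lt_of_le_of_ne (vectorSpan_mono ℝ hsub) ?_
    intro heq
    have hmem : ω₁ - ω₀ ∈ vectorSpan ℝ {ω ∈ S | dot fs ω = 0} :=
      vsub_mem_vectorSpan ℝ hω₁mem hω₀mem
    rw [← heq] at hmem
    have := hker hmem
    rw [LinearMap.mem_ker] at this
    have h0 : dot f (ω₁ - ω₀) = 0 := this
    rw [dot_sub_right, hω₀z f hfZ, sub_zero] at h0
    exact absurd h0 hpos.ne'
  have hrlt : r g < r fs := Submodule.finrank_lt_finrank_of_lt hlt
  have hle2 : sInf T ≤ r g := Nat.sInf_le ⟨g, hgZ, rfl⟩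
  omega

end GPTAux

open GPTAux

open GPT in
/-- Given an actual face `F` of `E(S)`, there exists a minimal exposed face `M`
of `S` such that, for all `ω ∈ S`, `e·ω = 1` for all `e ∈ F` iff `ω ∈ M`. -/
theorem stmt_5 (d : ℕ) (hd : 1 ≤ d) (S : Set (Fin (d + 1) → ℝ))
    (hS : IsStateSpace d S) (F : Set (Fin (d + 1) → ℝ))
    (hF : IsActualFace d (unrestricted d S) F) :
    ∃ M : Set (Fin (d + 1) → ℝ), IsMinimalExposedFace S M ∧
      ∀ ω ∈ S, ((∀ e ∈ F, dot e ω = 1) ↔ ω ∈ M) := by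
  obtain ⟨⟨hFne, h, m, hh0, hle, hFeq⟩, huF, hmax⟩ := hF
  obtain ⟨hSne, hScomp, hSconv, hSlast⟩ := hS
  have hum : dot h (unit d) = m := by
    rw [hFeq] at huF; exact huF.2
  -- Step 1: h = t • ω₀ with ω₀ ∈ S, t > 0
  obtain ⟨t, htpos, ω₀, hω₀S, hhtω⟩ :=
    exists_state_normal ⟨hSne, hScomp, hSconv, hSlast⟩ hh0 (fun c hc => hum ▸ hle c hc)
  have hω₀last : ω₀ (Fin.last d) = 1 := hSlast ω₀ hω₀S
  have hmt : m = t := by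
    rw [← hum, hhtω, dot_smul_left, dot_unit_right, hω₀last, mul_one]
  -- characterization of F
  have hFchar : ∀ e, e ∈ F ↔ (e ∈ unrestricted d S ∧ dot e ω₀ = 1) := by
    intro e
    rw [hFeq]
    simp only [Set.mem_setOf_eq]
    constructor
    · rintro ⟨heE, heq⟩
      refine ⟨heE, ?_⟩
      rw [hhtω, dot_smul_left, hmt] at heq
      have := mul_left_cancel₀ htpos.ne' (heq.trans (mul_one t).symm)
      rwa [dot_comm] at this
    · rintro ⟨heE, heq⟩
      refine ⟨heE, ?_⟩
      rw [hhtω, dot_smul_left, hmt, dot_comm ω₀ e, heq, mul_one]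
  -- the set Z of effects vanishing on ω₀
  set Z : Set (Fin (d+1) → ℝ) := {f | f ∈ unrestricted d S ∧ dot f ω₀ = 0} with hZ_def
  have hZne : Z.Nonempty := ⟨0, zero_mem_unrestricted, dot_zero_left ω₀⟩
  -- correspondence between F and Z
  have hFZ : ∀ ω ∈ S, ((∀ e ∈ F, dot e ω = 1) ↔ (∀ f ∈ Z, dot f ω = 0)) := by
    intro ω hω
    constructor
    · intro hall f hfZ
      obtain ⟨hfE, hf0⟩ := hfZ
      have huf : unit d - f ∈ F := by
        rw [hFchar]
        refine ⟨compl_mem_unrestricted hSlast hfE, ?_⟩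
        rw [dot_sub_left, dot_unit_left, hω₀last, hf0, sub_zero]
      have := hall _ huf
      rw [dot_sub_left, dot_unit_left, hSlast ω hω] at this
      linarith
    · intro hall e heF
      obtain ⟨heE, he1⟩ := (hFchar e).1 heF
      have huz : unit d - e ∈ Z := by
        refine ⟨compl_mem_unrestricted hSlast heE, ?_⟩
        rw [dot_sub_left, dot_unit_left, hω₀last, he1, sub_self]
      have := hall _ huz
      rw [dot_sub_left, dot_unit_left, hSlast ω hω] at this
      linarith
  -- Step 2: minimal face via Z
  have hmid : ∀ f ∈ Z, ∀ g ∈ Z, (2:ℝ)⁻¹ • (f + g) ∈ Z := by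
    rintro f ⟨hfE, hf0⟩ g ⟨hgE, hg0⟩
    constructor
    · intro ω hω
      obtain ⟨h1, h2⟩ := hfE ω hω
      obtain ⟨h3, h4⟩ := hgE ω hω
      rw [dot_smul_left, dot_add_left]
      constructor <;> nlinarith
    · rw [dot_smul_left, dot_add_left, hf0, hg0]; ring
  have hnonneg : ∀ f ∈ Z, ∀ ω ∈ S, 0 ≤ dot f ω := fun f hf ω hω => (hf.1 ω hω).1
  have hω₀z : ∀ f ∈ Z, dot f ω₀ = 0 := fun f hf => hf.2
  obtain ⟨fs, hfsZ, hfsmin⟩ := exists_min_face hmid hnonneg hω₀S hω₀z hZne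
  -- the minimal exposed face M
  set M : Set (Fin (d+1) → ℝ) := {ω ∈ S | dot fs ω = 0} with hM_def
  -- the main equivalence
  have hiff : ∀ ω ∈ S, ((∀ e ∈ F, dot e ω = 1) ↔ ω ∈ M) := by
    intro ω hω
    rw [hFZ ω hω]
    constructor
    · intro hall
      exact ⟨hω, hall fs hfsZ⟩
    · rintro ⟨hωS, hω0⟩ f hfZ
      exact hfsmin ω hωS hω0 f hfZ
  have hω₀M : ω₀ ∈ M := ⟨hω₀S, hω₀z fs hfsZ⟩
  have hfsE : fs ∈ unrestricted d S := hfsZ.1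
  -- M is an exposed face of S
  have hMexp : IsExposedFace S M := by
    refine ⟨⟨ω₀, hω₀M⟩, unit d - fs, 1, ?_, ?_, ?_⟩
    · intro h0
      have : dot (unit d - fs) ω₀ = 0 := by rw [h0, dot_zero_left]
      rw [dot_sub_left, dot_unit_left, hω₀last, hω₀z fs hfsZ, sub_zero] at this
      norm_num at this
    · intro c hc
      have := (hfsE c hc).1
      rw [dot_sub_left, dot_unit_left, hSlast c hc]
      linarith
    · ext ω
      simp only [hM_def, Set.mem_setOf_eq]
      constructor
      · rintro ⟨hωS, hω0⟩
        refine ⟨hωS, ?_⟩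
        rw [dot_sub_left, dot_unit_left, hSlast ω hωS, hω0, sub_zero]
      · rintro ⟨hωS, hω1⟩
        refine ⟨hωS, ?_⟩
        rw [dot_sub_left, dot_unit_left, hSlast ω hωS] at hω1
        linarith
  refine ⟨M, ⟨hMexp, ?_⟩, hiff⟩
  -- minimality of M
  intro N hN
  by_cases hMN : M ∩ N = ∅
  · exact Or.inr hMN
  obtain ⟨ω₁, hω₁M, hω₁N⟩ := Set.nonempty_iff_ne_empty.2 hMN
  obtain ⟨hNne, g, c, hg0, hgle, hNeq⟩ := hN
  have hω₁S : ω₁ ∈ S := hω₁M.1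
  left
  rw [Set.inter_eq_left]
  by_cases hconst : ∀ ω ∈ S, dot g ω = c
  · intro ω hωM
    rw [hNeq]
    exact ⟨hωM.1, hconst ω hωM.1⟩
  · push_neg at hconst
    obtain ⟨ω₂, hω₂S, hω₂ne⟩ := hconst
    have hω₂lt : dot g ω₂ < c := lt_of_le_of_ne (hgle ω₂ hω₂S) hω₂ne
    obtain ⟨ωm, hωmS, hmin⟩ := hScomp.exists_isMinOn hSne (continuous_dot g).continuousOn
    set a : ℝ := dot g ωm with ha_def
    have hac : a < c := lt_of_le_of_lt (hmin hω₂S) hω₂lt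
    have hca : (0:ℝ) < c - a := by linarith
    set eg : Fin (d+1) → ℝ := (c - a)⁻¹ • (g - a • unit d) with heg_def
    have hegval : ∀ ω ∈ S, dot eg ω = (c - a)⁻¹ * (dot g ω - a) := by
      intro ω hω
      rw [heg_def, dot_smul_left, dot_sub_left, dot_smul_left, dot_unit_left,
        hSlast ω hω, mul_one]
    have hegE : eg ∈ unrestricted d S := by
      intro ω hω
      rw [hegval ω hω]
      have h1 : a ≤ dot g ω := hmin hω
      have h2 : dot g ω ≤ c := hgle ω hω
      have hinv : (0:ℝ) < (c - a)⁻¹ := inv_pos.2 hca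
      constructor
      · exact mul_nonneg hinv.le (by linarith)
      · refine le_trans (mul_le_mul_of_nonneg_left (by linarith : dot g ω - a ≤ c - a)
          hinv.le) ?_
        rw [inv_mul_cancel₀ hca.ne']
    have hegiff : ∀ ω ∈ S, (dot eg ω = 1 ↔ dot g ω = c) := by
      intro ω hω
      rw [hegval ω hω]
      constructor
      · intro h1
        have := congrArg (fun x => (c - a) * x) h1
        simp only [mul_one] at this
        rw [← mul_assoc, mul_inv_cancel₀ hca.ne', one_mul] at this
        linarith
      · intro h1
        rw [h1, inv_mul_cancel₀ hca.ne']
    -- the exposed face F' of E(S) given by ω₁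
    have hω₁ne : ω₁ ≠ 0 := by
      intro h0
      have := hSlast ω₁ hω₁S
      rw [h0] at this
      simp at this
    have hF' : IsExposedFace (unrestricted d S) {e ∈ unrestricted d S | dot ω₁ e = 1} := by
      refine ⟨⟨unit d, unit_mem_unrestricted hSlast, ?_⟩, ω₁, 1, hω₁ne, ?_, rfl⟩
      · rw [dot_comm, dot_unit_state hSlast hω₁S]
      · intro e he
        rw [dot_comm]
        exact (he ω₁ hω₁S).2
    have hsubF : F ⊆ {e ∈ unrestricted d S | dot ω₁ e = 1} := by
      intro e heF
      refine ⟨((hFchar e).1 heF).1, ?_⟩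
      rw [dot_comm]
      exact ((hiff ω₁ hω₁S).2 hω₁M) e heF
    have hFeq' : F = {e ∈ unrestricted d S | dot ω₁ e = 1} := by
      by_contra hne
      exact hmax _ hF' (HasSubset.Subset.ssubset_of_ne hsubF hne)
    have hgω₁ : dot g ω₁ = c := by
      rw [hNeq] at hω₁N
      exact hω₁N.2
    have hegF : eg ∈ F := by
      rw [hFeq']
      refine ⟨hegE, ?_⟩
      rw [dot_comm]
      exact (hegiff ω₁ hω₁S).2 hgω₁
    intro ω hωM
    have hωS : ω ∈ S := hωM.1
    have heg1 : dot eg ω = 1 := ((hiff ω hωS).2 hωM) eg hegF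
    rw [hNeq]
    exact ⟨hωS, (hegiff ω hωS).1 heg1⟩
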